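/- arXiv:2105.03258 — 2 statements merged into one kernel-verified Lean document; each statement's English description precedes it below -/
import Mathlib

section
/- Suppose p > 0, p ≤ x ≤ 2p, and a·(2p - x) < u ≤ a·x. Then P(A·|C·p - x| ≤ u) = 1/2 + (1/(4a))·( u/p + (u/p)·ln(a·x/u) + a·(2 - x/p) ). -/
open MeasureTheory ProbabilityTheory
open scoped ENNReal

/-!
Condition on `A = s`. For fixed `s` the event only constrains `C`: if `s ≤ u / x` it holds for
every `C ∈ [0, 2]`, and otherwise it says `|C p - x| ≤ u / s`, i.e. `C ≥ x / p - u / (s p)`,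
the upper constraint `C ≤ (x + u / s) / p` being vacuous because `s ≤ a` and `a (2p - x) < u`.
By independence the probability is therefore the average over `s ∈ [-a, a]` of
`sliceProb p x u s`, which is `1` up to `u / x` and `1 - x / (2p) + u / (2ps)` beyond it;
the `1 / s` term integrates to the logarithm.
-/

/-- The uniform distribution on the interval `[s, t]`: Lebesgue measure restricted to
`[s, t]`, scaled by `(t - s)⁻¹`. -/
noncomputable def uniformMeasure (s t : ℝ) : Measure ℝ :=
  (ENNReal.ofReal (t - s))⁻¹ • volume.restrict (Set.Icc s t)

open Set

theorem IndepFun.measure_preimage_eq_lintegral {Ω α β : Type*} [MeasurableSpace Ω]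
    [MeasurableSpace α] [MeasurableSpace β] {P : Measure Ω} [IsFiniteMeasure P]
    {A : Ω → α} {C : Ω → β} (hA : AEMeasurable A P) (hC : AEMeasurable C P)
    (hInd : IndepFun A C P) {S : Set (α × β)} (hS : MeasurableSet S) :
    P ((fun ω => (A ω, C ω)) ⁻¹' S) = ∫⁻ s, P.map C (Prod.mk s ⁻¹' S) ∂P.map A := by
  rw [← Measure.prod_apply hS, ← hInd.map_prod_eq_prod_map_map hA hC,
    Measure.map_apply_of_aemeasurable (hA.prodMk hC) hS]

theorem ae_uniformMeasure_mem_Icc (s t : ℝ) : ∀ᵐ y ∂uniformMeasure s t, y ∈ Icc s t :=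
  Measure.ae_smul_measure (ae_restrict_mem measurableSet_Icc) _

theorem uniformMeasure_eq_ofReal_of_inter_Icc_eq {s t c d : ℝ} (hst : s < t) {E : Set ℝ}
    (hE : E ∩ Icc s t = Icc c d) : uniformMeasure s t E = ENNReal.ofReal ((d - c) / (t - s)) := by
  rw [uniformMeasure, Measure.smul_apply, Measure.restrict_apply' measurableSet_Icc, hE,
    Real.volume_Icc, smul_eq_mul, ENNReal.ofReal_div_of_pos (sub_pos.2 hst),
    ENNReal.div_eq_inv_mul]

theorem integral_uniformMeasure {s t : ℝ} (hst : s ≤ t) (f : ℝ → ℝ) :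
    ∫ y, f y ∂uniformMeasure s t = (∫ y in s..t, f y) / (t - s) := by
  rw [uniformMeasure, integral_smul_measure, ENNReal.toReal_inv,
    ENNReal.toReal_ofReal (sub_nonneg.2 hst), integral_Icc_eq_integral_Ioc,
    ← intervalIntegral.integral_of_le hst, smul_eq_mul, inv_mul_eq_div]

theorem setOf_abs_mul_sub_le_inter_Icc {p x r : ℝ} (hp : 0 < p) (hrx : r ≤ x)
    (hr : 2 * p - x ≤ r) : {c : ℝ | |c * p - x| ≤ r} ∩ Icc 0 2 = Icc ((x - r) / p) 2 := by
  ext c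
  simp only [mem_inter_iff, mem_ofPred_eq, mem_Icc, abs_le, div_le_iff₀ hp]
  constructor
  · rintro ⟨⟨h, -⟩, -, hc⟩
    exact ⟨by linarith, hc⟩
  · rintro ⟨h, hc⟩
    have hcp : c * p ≤ 2 * p := mul_le_mul_of_nonneg_right hc hp.le
    exact ⟨⟨by linarith, by linarith⟩, le_of_mul_le_mul_right (by linarith) hp, hc⟩

noncomputable def sliceProb (p x u s : ℝ) : ℝ :=
  if s ≤ u / x then 1 else 1 - x / (2 * p) + u / (2 * p) * s⁻¹

theorem measurable_sliceProb (p x u : ℝ) : Measurable (sliceProb p x u) :=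
  Measurable.ite measurableSet_Iic measurable_const (by fun_prop)

theorem sliceProb_nonneg {p x u : ℝ} (hp : 0 < p) (hx : 0 < x) (hx2 : x ≤ 2 * p) (hu : 0 ≤ u)
    (s : ℝ) : 0 ≤ sliceProb p x u s := by
  unfold sliceProb
  split_ifs with hs
  · exact zero_le_one
  · have hs0 : 0 < s := (div_nonneg hu hx.le).trans_lt (not_le.1 hs)
    have : x / (2 * p) ≤ 1 := (div_le_one (by positivity)).2 hx2
    have : 0 ≤ u / (2 * p) * s⁻¹ := by positivity
    linarith

theorem uniformMeasure_setOf_mul_abs_sub_le {p x u s : ℝ} (hp : 0 < p) (hx : 0 < x) (hu : 0 < u)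
    (hs : s * (2 * p - x) ≤ u) :
    uniformMeasure 0 2 {c | s * |c * p - x| ≤ u} = ENNReal.ofReal (sliceProb p x u s) := by
  by_cases hsux : s ≤ u / x
  · have hsub : Icc 0 2 ⊆ {c : ℝ | s * |c * p - x| ≤ u} := by
      rintro c ⟨hc0, hc2⟩
      rcases le_or_gt s 0 with hs0 | hs0
      · exact (mul_nonpos_of_nonpos_of_nonneg hs0 (abs_nonneg _)).trans hu.le
      · have hsx : s * x ≤ u := (le_div_iff₀ hx).1 hsux
        rw [mem_ofPred_eq, ← abs_of_pos hs0, ← abs_mul, abs_le]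
        have hscp : 0 ≤ s * c * p := by positivity
        have hs2cp : 0 ≤ s * (2 - c) * p := mul_nonneg (mul_nonneg hs0.le (by linarith)) hp.le
        constructor <;> linarith
    rw [uniformMeasure_eq_ofReal_of_inter_Icc_eq two_pos (inter_eq_self_of_subset_right hsub),
      sliceProb, if_pos hsux]
    norm_num
  · have hs0 : 0 < s := (div_pos hu hx).trans (not_le.1 hsux)
    have hset : {c : ℝ | s * |c * p - x| ≤ u} = {c | |c * p - x| ≤ u / s} := by
      ext c; exact (le_div_iff₀' hs0).symm
    have hrx : u / s ≤ x :=
      (div_le_iff₀ hs0).2 (by linarith [(div_lt_iff₀ hx).1 (not_le.1 hsux)])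
    have hr : 2 * p - x ≤ u / s := (le_div_iff₀' hs0).2 hs
    rw [hset, uniformMeasure_eq_ofReal_of_inter_Icc_eq two_pos
      (setOf_abs_mul_sub_le_inter_Icc hp hrx hr), sliceProb, if_neg hsux]
    congr 1
    field_simp
    ring

theorem integral_sliceProb {a p x u : ℝ} (hp : 0 < p) (hx : 0 < x) (hu : 0 < u)
    (hua : u / x ≤ a) :
    ∫ s in -a..a, sliceProb p x u s
      = (u / x + a) + (1 - x / (2 * p)) * (a - u / x) + u / (2 * p) * Real.log (a * x / u) := by
  have hux : 0 < u / x := div_pos hu hx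
  have hlow : EqOn (sliceProb p x u) (fun _ => 1) (uIcc (-a) (u / x)) := by
    intro s hs
    rw [uIcc_of_le (by linarith)] at hs
    exact if_pos hs.2
  have hhigh : EqOn (sliceProb p x u) (fun s => 1 - x / (2 * p) + u / (2 * p) * s⁻¹)
      (uIcc (u / x) a) := by
    intro s hs
    rw [uIcc_of_le hua] at hs
    rcases hs.1.eq_or_lt with rfl | hs'
    · -- the second branch of `sliceProb` also equals `1` at the breakpoint `u / x`
      simp only [sliceProb, le_refl, if_true]
      field_simp
      ring
    · exact if_neg (not_le.2 hs')
  have hinv : ContinuousOn (fun s : ℝ => s⁻¹) (uIcc (u / x) a) := by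
    refine continuousOn_inv₀.mono fun s hs => ?_
    rw [uIcc_of_le hua] at hs
    exact (hux.trans_le hs.1).ne'
  have hint_low : IntervalIntegrable (sliceProb p x u) volume (-a) (u / x) :=
    (intervalIntegrable_congr (hlow.mono uIoc_subset_uIcc)).2 intervalIntegrable_const
  have hint_high : IntervalIntegrable (sliceProb p x u) volume (u / x) a :=
    (intervalIntegrable_congr (hhigh.mono uIoc_subset_uIcc)).2
      (intervalIntegrable_const.add (hinv.intervalIntegrable.const_mul _))
  rw [← intervalIntegral.integral_add_adjacent_intervals hint_low hint_high,
    intervalIntegral.integral_congr hlow, intervalIntegral.integral_congr hhigh,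
    intervalIntegral.integral_add intervalIntegrable_const (hinv.intervalIntegrable.const_mul _),
    intervalIntegral.integral_const_mul, integral_inv_of_pos hux (hux.trans_le hua),
    div_div_eq_mul_div]
  simp only [intervalIntegral.integral_const, smul_eq_mul]
  ring

/-- CDF case from the proof of Theorem 1. -/
theorem gwo_cdf_case3
    {Ω : Type*} [MeasurableSpace Ω] (P : Measure Ω) [IsProbabilityMeasure P]
    (a p x : ℝ) (ha : 0 < a) (A C : Ω → ℝ) (hA : Measurable A) (hC : Measurable C)
    (hInd : IndepFun A C P)
    (hAlaw : Measure.map A P = uniformMeasure (-a) a)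
    (hClaw : Measure.map C P = uniformMeasure 0 2)
    (u : ℝ) (hp : 0 < p) (hx1 : p ≤ x) (hx2 : x ≤ 2 * p) (hu1 : a * (2 * p - x) < u) (hu2 : u ≤ a * x) :
    (P {ω | A ω * |C ω * p - x| ≤ u}).toReal
      = 1 / 2 + (1 / (4 * a)) * (u / p + (u / p) * Real.log (a * x / u) + a * (2 - x / p)) := by
  have hx : 0 < x := hp.trans_le hx1
  have hu : 0 < u := lt_of_le_of_lt (mul_nonneg ha.le (by linarith)) hu1
  have hS : MeasurableSet {q : ℝ × ℝ | q.1 * |q.2 * p - x| ≤ u} :=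
    measurableSet_le (by fun_prop) measurable_const
  have hslice : ∀ᵐ s ∂uniformMeasure (-a) a,
      uniformMeasure 0 2 {c | s * |c * p - x| ≤ u} = ENNReal.ofReal (sliceProb p x u s) := by
    filter_upwards [ae_uniformMeasure_mem_Icc (-a) a] with s hs
    exact uniformMeasure_setOf_mul_abs_sub_le hp hx hu
      ((mul_le_mul_of_nonneg_right hs.2 (by linarith)).trans hu1.le)
  calc (P {ω | A ω * |C ω * p - x| ≤ u}).toReal
      = (∫⁻ s, ENNReal.ofReal (sliceProb p x u s) ∂uniformMeasure (-a) a).toReal := by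
        rw [← lintegral_congr_ae hslice, ← hAlaw, ← hClaw]
        exact congrArg ENNReal.toReal
          (IndepFun.measure_preimage_eq_lintegral hA.aemeasurable hC.aemeasurable hInd hS)
    _ = (∫ s in -a..a, sliceProb p x u s) / (2 * a) := by
        rw [← integral_eq_lintegral_of_nonneg_ae
          (Filter.Eventually.of_forall (sliceProb_nonneg hp hx hx2 hu.le))
          (measurable_sliceProb p x u).aestronglyMeasurable,
          integral_uniformMeasure (by linarith), sub_neg_eq_add, ← two_mul]
    _ = _ := by
        rw [integral_sliceProb hp hx hu ((div_le_iff₀ hx).2 (by linarith))]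
        field_simp
        ring
end

section
/- Suppose p > 0, p ≤ x ≤ 2p, and 0 < u ≤ a·(2p - x). Then P(A·|C·p - x| ≤ u) = 1/2 + (1/(2a))·( u/p + (u/p)·ln( a·√(x·(2p - x)) / u ) ). -/
/-!
Conditionally on `C = c`, put `b = |c p - x|` and `r = u / a`. For `A` uniform on `[-a, a]`, the
event `A b ≤ u` is sure when `b ≤ r` and otherwise has probability `(a + u / b) / (2a)`; both cases
are `1/2 + r / (2 max(b, r))`, which is continuous in `b`. Averaging over `c ∈ [0, 2]` and
substituting `y = c p - x` turns the probability into `(2p)⁻¹ ∫_{-x}^{2p-x}` of this function of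
`|y|`. The hypotheses give `r ≤ 2p - x ≤ x`, so the integrand is `1` on `[-r, r]` and
`1/2 + r / (2|y|)` outside, and the two outer pieces contribute the logarithms.
-/

open MeasureTheory ProbabilityTheory
open scoped ENNReal

open Set

lemma uniformMeasure_apply (s t : ℝ) (S : Set ℝ) :
    uniformMeasure s t S = (ENNReal.ofReal (t - s))⁻¹ * volume (S ∩ Icc s t) := by
  simp [uniformMeasure, Measure.restrict_apply' measurableSet_Icc]

lemma uniformMeasure_eq_one_of_Icc_subset {s t : ℝ} (hst : s < t) {S : Set ℝ}
    (hS : Icc s t ⊆ S) : uniformMeasure s t S = 1 := by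
  rw [uniformMeasure_apply, inter_eq_right.mpr hS, Real.volume_Icc]
  exact ENNReal.inv_mul_cancel (by simpa using hst) ENNReal.ofReal_ne_top

lemma uniformMeasure_Iic {s t y : ℝ} (hst : s < t) (hy : y ≤ t) :
    uniformMeasure s t (Iic y) = ENNReal.ofReal ((y - s) / (t - s)) := by
  have hIcc : Iic y ∩ Icc s t = Icc s y := by
    ext z
    simp only [mem_inter_iff, mem_Iic, mem_Icc]
    constructor
    · rintro ⟨hzy, hsz, -⟩
      exact ⟨hsz, hzy⟩
    · rintro ⟨hsz, hzy⟩
      exact ⟨hzy, hsz, hzy.trans hy⟩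
  rw [uniformMeasure_apply, hIcc, Real.volume_Icc, ENNReal.ofReal_div_of_pos (by linarith),
    div_eq_mul_inv, mul_comm]

lemma lintegral_ofReal_uniformMeasure {s t : ℝ} (hst : s < t) {g : ℝ → ℝ}
    (hg : IntegrableOn g (Icc s t)) (hg0 : ∀ c, 0 ≤ g c) :
    ∫⁻ c, ENNReal.ofReal (g c) ∂uniformMeasure s t
      = ENNReal.ofReal ((t - s)⁻¹ * ∫ c in s..t, g c) := by
  rw [uniformMeasure, lintegral_smul_measure,
    ← ofReal_integral_eq_lintegral_ofReal hg (Filter.Eventually.of_forall hg0),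
    ENNReal.ofReal_mul (inv_nonneg.mpr (sub_nonneg.mpr hst.le)),
    ENNReal.ofReal_inv_of_pos (sub_pos.mpr hst), intervalIntegral.integral_of_le hst.le,
    integral_Icc_eq_integral_Ioc, smul_eq_mul]

lemma measure_mem_eq_lintegral_of_indepFun {Ω α β : Type*} [MeasurableSpace Ω]
    [MeasurableSpace α] [MeasurableSpace β] {P : Measure Ω} [IsFiniteMeasure P]
    {A : Ω → α} {C : Ω → β} (hA : Measurable A) (hC : Measurable C) (hInd : IndepFun A C P)
    {S : Set (β × α)} (hS : MeasurableSet S) :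
    P {ω | (C ω, A ω) ∈ S} = ∫⁻ c, P.map A (Prod.mk c ⁻¹' S) ∂P.map C := by
  rw [← Measure.prod_apply hS,
    ← (indepFun_iff_map_prod_eq_prod_map_map hC.aemeasurable hA.aemeasurable).mp hInd.symm,
    Measure.map_apply (hC.prodMk hA) hS]
  rfl

/-- `P(A * b ≤ u)` for `A` uniform on `[-a, a]`, `b ≥ 0` and `u > 0`, in terms of `r = u / a`. -/
noncomputable def uniformMulCdf (r b : ℝ) : ℝ := 1 / 2 + r / (2 * max b r)

lemma uniformMulCdf_of_le {r b : ℝ} (hr : 0 < r) (hb : b ≤ r) : uniformMulCdf r b = 1 := by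
  rw [uniformMulCdf, max_eq_right hb]
  field_simp
  norm_num

lemma uniformMulCdf_of_ge {r b : ℝ} (hb : r ≤ b) : uniformMulCdf r b = 1 / 2 + r / (2 * b) := by
  rw [uniformMulCdf, max_eq_left hb]

lemma uniformMulCdf_nonneg {r : ℝ} (hr : 0 ≤ r) (b : ℝ) : 0 ≤ uniformMulCdf r b := by
  have : 0 ≤ max b r := le_max_of_le_right hr
  unfold uniformMulCdf
  positivity

lemma continuous_uniformMulCdf {r : ℝ} (hr : 0 < r) : Continuous (uniformMulCdf r) :=
  continuous_const.add <| continuous_const.div (by fun_prop) fun b =>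
    mul_ne_zero two_ne_zero (hr.trans_le (le_max_right b r)).ne'

lemma uniformMeasure_setOf_mul_le {a u b : ℝ} (ha : 0 < a) (hu : 0 < u) (hb : 0 ≤ b) :
    uniformMeasure (-a) a {s | s * b ≤ u} = ENNReal.ofReal (uniformMulCdf (u / a) b) := by
  rcases le_or_gt b (u / a) with hbr | hrb
  · rw [uniformMulCdf_of_le (div_pos hu ha) hbr, ENNReal.ofReal_one]
    refine uniformMeasure_eq_one_of_Icc_subset (by linarith) fun s hs => ?_
    have hab : a * b ≤ u := (le_div_iff₀' ha).mp hbr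
    exact (mul_le_mul_of_nonneg_right hs.2 hb).trans hab
  · have hb : 0 < b := (div_pos hu ha).trans hrb
    have hset : {s | s * b ≤ u} = Iic (u / b) := by
      ext s
      simp [le_div_iff₀ hb]
    have hub : u / b ≤ a := (div_le_iff₀ hb).mpr (by rw [div_lt_iff₀ ha] at hrb; linarith)
    rw [hset, uniformMeasure_Iic (by linarith) hub, uniformMulCdf_of_ge hrb.le]
    congr 1
    field_simp
    ring

lemma integral_uniformMulCdf_of_le {r m : ℝ} (hr : 0 < r) (hm : r ≤ m) :
    ∫ y in r..m, uniformMulCdf r y = (m - r) / 2 + r / 2 * Real.log (m / r) := by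
  have hpos : ∀ y ∈ uIcc r m, 0 < y := by
    rw [uIcc_of_le hm]
    exact fun y hy => hr.trans_le hy.1
  calc ∫ y in r..m, uniformMulCdf r y = ∫ y in r..m, (1 / 2 + r / 2 * y⁻¹) := by
        refine intervalIntegral.integral_congr fun y hy => ?_
        rw [uIcc_of_le hm] at hy
        simp only [uniformMulCdf_of_ge hy.1]
        field_simp
    _ = (m - r) / 2 + r / 2 * Real.log (m / r) := by
        rw [intervalIntegral.integral_add intervalIntegrable_const
            ((intervalIntegral.intervalIntegrable_inv (fun y hy => (hpos y hy).ne')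
              continuousOn_id).const_mul _),
          intervalIntegral.integral_const_mul, integral_inv_of_pos hr (hr.trans_le hm),
          intervalIntegral.integral_const, smul_eq_mul]
        ring

lemma integral_uniformMulCdf_abs {r l m : ℝ} (hr : 0 < r) (hl : r ≤ l) (hm : r ≤ m) :
    ∫ y in -l..m, uniformMulCdf r |y|
      = (l + m) / 2 + r + r / 2 * (Real.log (l / r) + Real.log (m / r)) := by
  have hint : ∀ l' m', IntervalIntegrable (fun y => uniformMulCdf r |y|) volume l' m' :=
    fun _ _ => ((continuous_uniformMulCdf hr).comp continuous_abs).intervalIntegrable _ _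
  have hleft : ∫ y in -l..-r, uniformMulCdf r |y| = ∫ y in r..l, uniformMulCdf r y := by
    rw [← intervalIntegral.integral_comp_neg]
    refine intervalIntegral.integral_congr fun y hy => ?_
    rw [uIcc_of_le hl] at hy
    simp [abs_of_pos (hr.trans_le hy.1)]
  have hmid : ∫ y in -r..r, uniformMulCdf r |y| = 2 * r := by
    rw [intervalIntegral.integral_congr (g := fun _ => (1 : ℝ)) fun y hy => ?_]
    · rw [intervalIntegral.integral_const, smul_eq_mul]
      ring
    · rw [uIcc_of_le (by linarith)] at hy
      exact uniformMulCdf_of_le hr (abs_le.mpr hy)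
  have hright : ∫ y in r..m, uniformMulCdf r |y| = ∫ y in r..m, uniformMulCdf r y := by
    refine intervalIntegral.integral_congr fun y hy => ?_
    rw [uIcc_of_le hm] at hy
    simp [abs_of_pos (hr.trans_le hy.1)]
  rw [← intervalIntegral.integral_add_adjacent_intervals (hint (-l) (-r)) (hint (-r) m),
    ← intervalIntegral.integral_add_adjacent_intervals (hint (-r) r) (hint r m), hleft, hmid, hright,
    integral_uniformMulCdf_of_le hr hl, integral_uniformMulCdf_of_le hr hm]
  ring

theorem gwo_cdf_case4_general
    {Ω : Type*} [MeasurableSpace Ω] (P : Measure Ω) [IsProbabilityMeasure P]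
    (a p x : ℝ) (ha : 0 < a) (A C : Ω → ℝ) (hA : Measurable A) (hC : Measurable C)
    (hInd : IndepFun A C P)
    (hAlaw : Measure.map A P = uniformMeasure (-a) a)
    (hClaw : Measure.map C P = uniformMeasure 0 2)
    (u : ℝ) (hp : 0 < p) (hx1 : p ≤ x) (hu1 : 0 < u) (hu2 : u ≤ a * (2 * p - x)) :
    (P {ω | A ω * |C ω * p - x| ≤ u}).toReal
      = 1 / 2 + (1 / (2 * a)) * (u / p + (u / p) * Real.log (a * Real.sqrt (x * (2 * p - x)) / u)) := by
  have hr : 0 < u / a := div_pos hu1 ha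
  have hrm : u / a ≤ 2 * p - x := (div_le_iff₀' ha).mpr hu2
  have hrl : u / a ≤ x := hrm.trans (by linarith)
  have hx : 0 < x := hr.trans_le hrl
  have h2px : 0 < 2 * p - x := hr.trans_le hrm
  have hprob : P {ω | A ω * |C ω * p - x| ≤ u}
      = ∫⁻ c, ENNReal.ofReal (uniformMulCdf (u / a) |c * p - x|) ∂uniformMeasure 0 2 := by
    refine (measure_mem_eq_lintegral_of_indepFun (S := {q | q.2 * |q.1 * p - x| ≤ u}) hA hC hInd
      (measurableSet_le (by fun_prop) measurable_const)).trans ?_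
    rw [hAlaw, hClaw]
    exact lintegral_congr fun c => uniformMeasure_setOf_mul_le ha hu1 (abs_nonneg (c * p - x))
  have hsubst : ∫ c in (0 : ℝ)..2, uniformMulCdf (u / a) |c * p - x|
      = p⁻¹ * ∫ y in -x..2 * p - x, uniformMulCdf (u / a) |y| := by
    simp_rw [mul_comm _ p]
    rw [intervalIntegral.integral_comp_mul_sub (fun y => uniformMulCdf (u / a) |y|) hp.ne' x]
    simp
  have hlog : Real.log (x / (u / a)) + Real.log ((2 * p - x) / (u / a))
      = 2 * Real.log (a * Real.sqrt (x * (2 * p - x)) / u) := by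
    rw [← Real.log_mul (by positivity) (by positivity),
      show ∀ y, 2 * Real.log y = Real.log (y ^ 2) by simp [Real.log_pow], div_pow, mul_pow,
      Real.sq_sqrt (by positivity)]
    congr 1
    field_simp
  have hcont : Continuous fun c => uniformMulCdf (u / a) |c * p - x| :=
    (continuous_uniformMulCdf hr).comp (by fun_prop)
  rw [hprob, lintegral_ofReal_uniformMeasure two_pos hcont.integrableOn_Icc
      fun c => uniformMulCdf_nonneg hr.le _,
    ENNReal.toReal_ofReal (mul_nonneg (by norm_num)
      (intervalIntegral.integral_nonneg zero_le_two fun c _ => uniformMulCdf_nonneg hr.le _)),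
    hsubst, integral_uniformMulCdf_abs hr hrl hrm, hlog]
  field_simp
  ring

/-- CDF case from the proof of Theorem 1. -/
theorem gwo_cdf_case4
    {Ω : Type*} [MeasurableSpace Ω] (P : Measure Ω) [IsProbabilityMeasure P]
    (a p x : ℝ) (ha : 0 < a) (A C : Ω → ℝ) (hA : Measurable A) (hC : Measurable C)
    (hInd : IndepFun A C P)
    (hAlaw : Measure.map A P = uniformMeasure (-a) a)
    (hClaw : Measure.map C P = uniformMeasure 0 2)
    (u : ℝ) (hp : 0 < p) (hx1 : p ≤ x) (hx2 : x ≤ 2 * p) (hu1 : 0 < u) (hu2 : u ≤ a * (2 * p - x)) :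
    (P {ω | A ω * |C ω * p - x| ≤ u}).toReal
      = 1 / 2 + (1 / (2 * a)) * (u / p + (u / p) * Real.log (a * Real.sqrt (x * (2 * p - x)) / u)) :=
  gwo_cdf_case4_general P a p x ha A C hA hC hInd hAlaw hClaw u hp hx1 hu1 hu2
end
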